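/- The function ξ(x) = (q^{l/2}x;q)_∞ (q^{(l+1)/2}x;q)_∞ / ((q^{(1-2l)/4}e^{iθ}x;q)_∞ (q^{(1-2l)/4}e^{-iθ}x;q)_∞) satisfies the q-difference equation (b/(2x)) q^{(2l-1)/4} [(1 - q^{(1-2l)/4}x)^2 ξ(x) - (1 - q^{l/2}x)(1 - q^{(l+1)/2}x) ξ(qx)] = λ ξ(x), where b = (q^{1/2}-q^{-1/2})^{-1} and λ = (1 - cos θ)/(q^{-1/2} - q^{1/2}). -/

import Mathlib

open Complex

/-- The infinite `q`-Pochhammer symbol `(a;q)_∞`. -/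
noncomputable def qpochInf (a : ℂ) (q : ℝ) : ℂ := ∏' r : ℕ, (1 - a * (q : ℂ) ^ r)

/-- The eigenfunction
`ξ(x) = (q^{l/2}x;q)_∞ (q^{(l+1)/2}x;q)_∞ / ((q^{(1-2l)/4}e^{iθ}x;q)_∞ (q^{(1-2l)/4}e^{-iθ}x;q)_∞)`. -/
noncomputable def xiFun (q l θ : ℝ) (x : ℂ) : ℂ :=
  qpochInf ((q ^ (l / 2) : ℝ) * x) q * qpochInf ((q ^ ((l + 1) / 2) : ℝ) * x) q /
    (qpochInf ((q ^ ((1 - 2 * l) / 4) : ℝ) * Complex.exp (Complex.I * θ) * x) q *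
      qpochInf ((q ^ ((1 - 2 * l) / 4) : ℝ) * Complex.exp (-(Complex.I * θ)) * x) q)

lemma qpoch_multipliable (q : ℝ) (hq : 0 < q) (hq1 : q < 1) (a : ℂ) :
    Multipliable (fun r : ℕ => 1 - a * (q : ℂ) ^ r) := by
  by_cases hzero : ∃ k, 1 - a * (q : ℂ) ^ k = 0
  · obtain ⟨k, hk⟩ := hzero
    refine ⟨0, ?_⟩
    rw [HasProd]
    apply Filter.Tendsto.congr' _ tendsto_const_nhds
    filter_upwards [Filter.eventually_ge_atTop {k}] with s hs
    exact (Finset.prod_eq_zero (hs (Finset.mem_singleton_self k)) hk).symm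
  · push_neg at hzero
    have hsum : Summable (fun n : ℕ => Complex.log (1 - a * (q : ℂ) ^ n)) := by
      have hgeo : Summable (fun n : ℕ => (3/2 : ℝ) * (‖a‖ * q ^ n)) :=
        ((summable_geometric_of_lt_one hq.le hq1).mul_left _).mul_left _
      refine Summable.of_norm_bounded_eventually_nat hgeo ?_
      have ht : Filter.Tendsto (fun n : ℕ => ‖a‖ * q ^ n) Filter.atTop (nhds 0) := by
        simpa using (tendsto_pow_atTop_nhds_zero_of_lt_one hq.le hq1).const_mul ‖a‖
      filter_upwards [ht.eventually_le_const (by norm_num : (0:ℝ) < 1/2)] with n hn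
      have hz : ‖-(a * (q : ℂ) ^ n)‖ ≤ 1/2 := by
        rw [norm_neg, norm_mul, norm_pow]
        simpa [abs_of_pos hq] using hn
      have := Complex.norm_log_one_add_half_le_self hz
      rw [show (1 : ℂ) + -(a * (q : ℂ) ^ n) = 1 - a * (q : ℂ) ^ n by ring] at this
      refine this.trans ?_
      rw [norm_neg, norm_mul, norm_pow]
      simp [abs_of_pos hq]
    exact Complex.multipliable_of_summable_log hsum

set_option maxHeartbeats 1000000 in
lemma qpoch_peel (q : ℝ) (hq : 0 < q) (hq1 : q < 1) (a : ℂ) :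
    qpochInf a q = (1 - a) * qpochInf (a * q) q := by
  have hm : Multipliable (fun n : ℕ => 1 - a * (q : ℂ) ^ (n + 1)) := by
    apply (qpoch_multipliable q hq hq1 (a * q)).congr
    intro b
    rw [pow_succ']
    ring
  have h := tprod_eq_zero_mul' (f := fun r : ℕ => 1 - a * (q : ℂ) ^ r) hm
  unfold qpochInf
  rw [h]
  congr 1
  · simp
  · exact tprod_congr fun b => by rw [pow_succ']; ring
lemma key_alg (a c s1 s2 x : ℂ) (ha : a ≠ 0) (hc : c ≠ 0) (hx : x ≠ 0) (hs : s1 - s2 ≠ 0) :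
    (s1 - s2)⁻¹ / (2 * x) * a⁻¹ * ((1 - a * x) ^ 2 - (1 - a * c * x) * (1 - a * c⁻¹ * x))
      = (1 - (c + c⁻¹) / 2) / (s2 - s1) := by
  have hs' : s2 - s1 ≠ 0 := fun h => hs (by linear_combination -h)
  have e1 : (1 - a * x) ^ 2 - (1 - a * c * x) * (1 - a * c⁻¹ * x) = a * x * (c + c⁻¹ - 2) := by
    field_simp
    ring
  rw [e1]
  have hia : a⁻¹ * a = 1 := inv_mul_cancel₀ ha
  have hix : x * (2 * x)⁻¹ = 2⁻¹ := by
    rw [mul_inv, ← mul_assoc, mul_comm x, mul_assoc, mul_inv_cancel₀ hx, mul_one]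
  have hneg : (s2 - s1)⁻¹ = -(s1 - s2)⁻¹ := by
    rw [show s2 - s1 = -(s1 - s2) by ring, inv_neg]
  linear_combination ((s1 - s2)⁻¹ * (2 * x)⁻¹ * x * (c + c⁻¹ - 2)) * hia +
    ((s1 - s2)⁻¹ * (c + c⁻¹ - 2)) * hix + ((c + c⁻¹) / 2 - 1) * hneg

set_option maxHeartbeats 4000000 in
/-- `ξ` satisfies the `q`-difference equation
`(b/(2x)) q^{(2l-1)/4} [(1 - q^{(1-2l)/4}x)² ξ(x) - (1 - q^{l/2}x)(1 - q^{(l+1)/2}x) ξ(qx)]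
  = λ ξ(x)` with `b = (q^{1/2}-q^{-1/2})⁻¹` and `λ = (1 - cos θ)/(q^{-1/2}-q^{1/2})`. -/
theorem xi_q_difference_equation (q l θ : ℝ) (hq : 0 < q) (hq1 : q < 1) (hl : 0 < l)
    (x : ℂ) (hx : x ≠ 0)
    (hd1 : qpochInf ((q ^ ((1 - 2 * l) / 4) : ℝ) * Complex.exp (Complex.I * θ) * x) q ≠ 0)
    (hd2 : qpochInf ((q ^ ((1 - 2 * l) / 4) : ℝ) * Complex.exp (-(Complex.I * θ)) * x) q ≠ 0) :
    (((q ^ ((1 : ℝ) / 2) - q ^ (-(1 : ℝ) / 2))⁻¹ : ℝ) / (2 * x)) * ((q ^ ((2 * l - 1) / 4) : ℝ)) *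
      ((1 - (q ^ ((1 - 2 * l) / 4) : ℝ) * x) ^ 2 * xiFun q l θ x -
        (1 - (q ^ (l / 2) : ℝ) * x) * (1 - (q ^ ((l + 1) / 2) : ℝ) * x) *
          xiFun q l θ ((q : ℂ) * x)) =
      (((1 - Real.cos θ) / (q ^ (-(1 : ℝ) / 2) - q ^ ((1 : ℝ) / 2)) : ℝ)) * xiFun q l θ x := by
  have hc0 : Complex.exp (Complex.I * θ) ≠ 0 := Complex.exp_ne_zero _
  have hcinv : Complex.exp (-(Complex.I * (θ : ℂ))) = (Complex.exp (Complex.I * θ))⁻¹ := by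
    rw [Complex.exp_neg]
  have hsumc : Complex.exp (Complex.I * θ) + Complex.exp (-(Complex.I * (θ : ℂ)))
      = 2 * (Real.cos θ : ℂ) := by
    rw [mul_comm Complex.I (θ : ℂ), ← neg_mul, Complex.exp_mul_I, Complex.exp_mul_I,
      Complex.cos_neg, Complex.sin_neg, Complex.ofReal_cos]
    ring
  have hcos : (Real.cos θ : ℂ)
      = (Complex.exp (Complex.I * θ) + (Complex.exp (Complex.I * θ))⁻¹) / 2 := by
    rw [← hcinv]; linear_combination (-1/2 : ℂ) * hsumc
  have hga : ((q ^ ((2 * l - 1) / 4) : ℝ) : ℂ) = (((q ^ ((1 - 2 * l) / 4) : ℝ) : ℂ))⁻¹ := by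
    rw [← Complex.ofReal_inv]
    congr 1
    rw [show (2 * l - 1) / 4 = -((1 - 2 * l) / 4) by ring, Real.rpow_neg hq.le]
  have hα0 : (((q ^ ((1 - 2 * l) / 4) : ℝ) : ℂ)) ≠ 0 := by
    simp [Complex.ofReal_ne_zero, (Real.rpow_pos_of_pos hq _).ne']
  have hS0 : ((q ^ ((1 : ℝ) / 2) : ℝ) : ℂ) - ((q ^ (-(1 : ℝ) / 2) : ℝ) : ℂ) ≠ 0 := by
    rw [← Complex.ofReal_sub, Complex.ofReal_ne_zero]
    have : q ^ ((1 : ℝ) / 2) < q ^ (-(1 : ℝ) / 2) :=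
      Real.rpow_lt_rpow_of_exponent_gt hq hq1 (by norm_num)
    exact sub_ne_zero.mpr this.ne
  have harg : ∀ c : ℂ, c * ((q : ℂ) * x) = c * x * (q : ℂ) := fun c => by ring
  rw [qpoch_peel q hq hq1 (((q ^ ((1 - 2 * l) / 4) : ℝ) : ℂ) * Complex.exp (Complex.I * θ) * x)]
    at hd1
  rw [qpoch_peel q hq hq1
    (((q ^ ((1 - 2 * l) / 4) : ℝ) : ℂ) * Complex.exp (-(Complex.I * (θ : ℂ))) * x)] at hd2
  obtain ⟨hE1, hD1⟩ := mul_ne_zero_iff.mp hd1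
  obtain ⟨hE2, hD2⟩ := mul_ne_zero_iff.mp hd2
  have h1 : (1 - ((q ^ (l / 2) : ℝ) : ℂ) * x) * (1 - ((q ^ ((l + 1) / 2) : ℝ) : ℂ) * x) *
      xiFun q l θ ((q : ℂ) * x)
      = (1 - ((q ^ ((1 - 2 * l) / 4) : ℝ) : ℂ) * Complex.exp (Complex.I * θ) * x) *
        (1 - ((q ^ ((1 - 2 * l) / 4) : ℝ) : ℂ) * Complex.exp (-(Complex.I * (θ : ℂ))) * x) *
        xiFun q l θ x := by
    unfold xiFun
    simp only [harg]
    rw [qpoch_peel q hq hq1 (((q ^ (l / 2) : ℝ) : ℂ) * x),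
      qpoch_peel q hq hq1 (((q ^ ((l + 1) / 2) : ℝ) : ℂ) * x),
      qpoch_peel q hq hq1 (((q ^ ((1 - 2 * l) / 4) : ℝ) : ℂ) * Complex.exp (Complex.I * θ) * x),
      qpoch_peel q hq hq1
        (((q ^ ((1 - 2 * l) / 4) : ℝ) : ℂ) * Complex.exp (-(Complex.I * (θ : ℂ))) * x)]
    set A := qpochInf (((q ^ (l / 2) : ℝ) : ℂ) * x * q) q
    set B := qpochInf (((q ^ ((l + 1) / 2) : ℝ) : ℂ) * x * q) q
    set C := qpochInf (((q ^ ((1 - 2 * l) / 4) : ℝ) : ℂ) * Complex.exp (Complex.I * θ) * x * q) q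
    set D := qpochInf
      (((q ^ ((1 - 2 * l) / 4) : ℝ) : ℂ) * Complex.exp (-(Complex.I * (θ : ℂ))) * x * q) q
    set E := 1 - ((q ^ ((1 - 2 * l) / 4) : ℝ) : ℂ) * Complex.exp (Complex.I * θ) * x
    set F := 1 - ((q ^ ((1 - 2 * l) / 4) : ℝ) : ℂ) * Complex.exp (-(Complex.I * (θ : ℂ))) * x
    field_simp
  rw [h1]
  have key : (((q ^ ((1 : ℝ) / 2) - q ^ (-(1 : ℝ) / 2))⁻¹ : ℝ) : ℂ) / (2 * x) *
      (((q ^ ((2 * l - 1) / 4) : ℝ)) : ℂ) *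
      ((1 - ((q ^ ((1 - 2 * l) / 4) : ℝ) : ℂ) * x) ^ 2 -
        (1 - ((q ^ ((1 - 2 * l) / 4) : ℝ) : ℂ) * Complex.exp (Complex.I * θ) * x) *
        (1 - ((q ^ ((1 - 2 * l) / 4) : ℝ) : ℂ) * Complex.exp (-(Complex.I * (θ : ℂ))) * x))
      = (((1 - Real.cos θ) / (q ^ (-(1 : ℝ) / 2) - q ^ ((1 : ℝ) / 2)) : ℝ) : ℂ) := by
    have hS0' : ((q ^ (-(1 : ℝ) / 2) : ℝ) : ℂ) - ((q ^ ((1 : ℝ) / 2) : ℝ) : ℂ) ≠ 0 := by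
      intro h; apply hS0; linear_combination -h
    rw [hcinv, hga]
    push_cast
    rw [Complex.ofReal_cos] at hcos
    rw [hcos]
    linear_combination key_alg (((q ^ ((1 - 2 * l) / 4) : ℝ) : ℂ)) (Complex.exp (Complex.I * θ))
      (((q ^ ((1 : ℝ) / 2) : ℝ) : ℂ)) (((q ^ (-(1 : ℝ) / 2) : ℝ) : ℂ)) x hα0 hc0 hx hS0
  linear_combination (xiFun q l θ x) * key
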